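/- arXiv:2107.09418 — 3 statements merged into one kernel-verified Lean document; each statement's English description precedes it below -/
import Mathlib

section
/- For a p×p symmetric positive definite matrix Σ = Λ⁻¹, the determinant of the Fisher information matrix of the multivariate normal model in the canonical parameterization φ = (ξ, vech(Λ)) with ξ = Λμ satisfies |J_{φφ}(φ)| = n^{p(p+3)/2} · 2^{-p} · |Λ|^{-(p+2)}, where J_{φφ}(φ) is the block matrix with blocks nΛ⁻¹, −n(ξ^TΛ⁻¹ ⊗ Λ⁻¹)D_p, −nD_p^T(Λ⁻¹ξ ⊗ Λ⁻¹), and (n/2)D_p^T{Λ⁻¹(I_p + 2ξξ^TΛ⁻¹) ⊗ Λ⁻¹}D_p. -/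
/-!
Pulling the sample size out of every block and taking the Schur complement of the block `Λ⁻¹`
removes every `ξ`-term and leaves `½ Dᵀ (Λ⁻¹ ⊗ Λ⁻¹) D`. The rows of `(A ⊗ A) D` are invariant
under swapping the two row indices, so `(A ⊗ A) D = D (symKron A)`; `symKron` is multiplicative,
and `DᵀD` is diagonal with an entry `2` for each of the `p(p-1)/2` off-diagonal pairs. Finally
`det (symKron A) = (det A)^(p+1)`: both sides are multiplicative, for triangular `A` the matrix
`symKron A` is triangular in the lexicographic order of index pairs, and diagonal matrices and
transvections generate all matrices.
-/

open Matrix Kronecker Finset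

lemma Matrix.BlockTriangular.det_of_injective {m α R : Type*} [CommRing R] [Fintype m]
    [DecidableEq m] [LinearOrder α] {M : Matrix m m R} {b : m → α} (hM : M.BlockTriangular b)
    (hb : Function.Injective b) : M.det = ∏ i, M i i := by
  let := LinearOrder.lift' b hb
  exact det_of_isUpperTriangular hM

lemma Matrix.kronecker_submatrix_mul_mul_kronecker_submatrix {l m n n' o r ι R : Type*}
    [CommSemiring R] [Fintype n] [Fintype n'] [Fintype ι] [Subsingleton ι] (i₀ : ι)
    (X : Matrix l ι R) (B : Matrix m n R) (M : Matrix n n' R) (Y : Matrix ι r R)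
    (C : Matrix n' o R) :
    (X ⊗ₖ B).submatrix id (fun j => (i₀, j)) * M * (Y ⊗ₖ C).submatrix (fun j => (i₀, j)) id =
      (X * Y) ⊗ₖ (B * M * C) := by
  ext ⟨a, b⟩ ⟨c, d⟩
  simp only [mul_apply, submatrix_apply, kroneckerMap_apply, id, Fintype.sum_subsingleton _ i₀,
    Finset.sum_mul, Finset.mul_sum]
  refine Finset.sum_congr rfl fun j _ => Finset.sum_congr rfl fun k _ => ?_
  ring

namespace Vech

variable {R : Type*} [CommRing R] {p : ℕ}

abbrev Index (p : ℕ) := {ij : Fin p × Fin p // ij.2 ≤ ij.1}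

def toIndex (ab : Fin p × Fin p) : Index p := ⟨(max ab.1 ab.2, min ab.1 ab.2), min_le_max⟩

@[simp] lemma toIndex_val (kl : Index p) : toIndex kl.1 = kl := by
  obtain ⟨⟨k, l⟩, h⟩ := kl
  simp [toIndex, h]

@[simp] lemma toIndex_swap (ab : Fin p × Fin p) : toIndex ab.swap = toIndex ab := by
  simp [toIndex, max_comm, min_comm]

lemma toIndex_eq_iff {ab : Fin p × Fin p} {kl : Index p} :
    toIndex ab = kl ↔ ab = kl.1 ∨ ab = kl.1.swap := by
  constructor
  · rintro rfl
    obtain ⟨a, b⟩ := ab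
    rcases le_total b a with h | h <;> simp [toIndex, h]
  · rintro (rfl | rfl) <;> simp

lemma filter_toIndex_eq (kl : Index p) :
    ({ab | toIndex ab = kl} : Finset (Fin p × Fin p)) = {kl.1, kl.1.swap} := by
  ext ab
  simp [toIndex_eq_iff]

variable (R p) in
def dupMatrix : Matrix (Fin p × Fin p) (Index p) R :=
  of fun ab kl => if toIndex ab = kl then 1 else 0

lemma vecMul_dupMatrix_apply (f : Fin p × Fin p → R) (kl : Index p) :
    (f ᵥ* dupMatrix R p) kl = f kl.1 + if kl.1.1 = kl.1.2 then 0 else f kl.1.swap := by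
  have hswap : kl.1.swap = kl.1 ↔ kl.1.1 = kl.1.2 := by
    rw [Prod.ext_iff]; exact ⟨fun h => h.2, fun h => ⟨h.symm, h⟩⟩
  simp only [vecMul, dotProduct, dupMatrix, of_apply, mul_ite, mul_one, mul_zero]
  rw [← Finset.sum_filter, filter_toIndex_eq]
  split_ifs with h
  · rw [← hswap] at h; rw [h, Finset.pair_eq_singleton, Finset.sum_singleton, add_zero]
  · rw [Finset.sum_pair (fun h' => h (hswap.mp h'.symm))]

lemma dupMatrix_swap_apply (ab : Fin p × Fin p) (kl : Index p) :
    dupMatrix R p ab.swap kl = dupMatrix R p ab kl := by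
  simp only [dupMatrix, of_apply, toIndex_swap]

lemma eq_dupMatrix_of_mulVec {D : Matrix (Fin p × Fin p) (Index p) R}
    (hD : ∀ M : Matrix (Fin p) (Fin p) R, M.IsSymm →
      D.mulVec (fun ij => M ij.val.1 ij.val.2) = fun ij => M ij.1 ij.2) :
    D = dupMatrix R p := by
  ext ab kl
  let S : Matrix (Fin p) (Fin p) R := of fun a b => dupMatrix R p (a, b) kl
  have hS : S.IsSymm := by
    ext a b
    exact dupMatrix_swap_apply (a, b) kl
  have hvech : (fun ij : Index p => S ij.1.1 ij.1.2) = Pi.single kl 1 := by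
    ext ij
    simp [S, dupMatrix, Pi.single_apply]
  have h := congrFun (hD S hS) ab
  rw [hvech, mulVec_single] at h
  simp only [col_apply, MulOpposite.op_one, one_smul] at h
  exact h

lemma submatrix_val_dupMatrix_mul {ι : Type*} (M : Matrix (Index p) ι R) :
    (dupMatrix R p * M).submatrix Subtype.val id = M := by
  ext kl j
  simp [mul_apply, dupMatrix]

/-- The matrix of `M ↦ A * M * Aᵀ` on vech coordinates. -/
def symKron (A : Matrix (Fin p) (Fin p) R) : Matrix (Index p) (Index p) R :=
  ((A ⊗ₖ A) * dupMatrix R p).submatrix Subtype.val id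

lemma dupMatrix_mul_submatrix_val {ι : Type*} (N : Matrix (Fin p × Fin p) ι R)
    (hN : ∀ ab, N ab.swap = N ab) :
    dupMatrix R p * N.submatrix (Subtype.val : Index p → _) id = N := by
  refine Matrix.ext fun ab j => ?_
  simp only [mul_apply, dupMatrix, of_apply, ite_mul, one_mul, zero_mul,
    Finset.sum_ite_eq, Finset.mem_univ, if_true, submatrix_apply, id]
  rcases toIndex_eq_iff.mp (rfl : toIndex ab = toIndex ab) with h | h
  · rw [← h]
  · conv_rhs => rw [h, hN]

lemma kronecker_self_mul_dupMatrix_swap (A : Matrix (Fin p) (Fin p) R) (ab : Fin p × Fin p) :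
    ((A ⊗ₖ A) * dupMatrix R p) ab.swap = ((A ⊗ₖ A) * dupMatrix R p) ab := by
  ext kl
  rw [mul_apply, mul_apply, ← (Equiv.prodComm (Fin p) (Fin p)).sum_comp]
  refine Finset.sum_congr rfl fun cd _ => ?_
  simp only [Equiv.prodComm_apply, dupMatrix_swap_apply, kroneckerMap_apply, Prod.fst_swap,
    Prod.snd_swap, mul_comm (A ab.2 _)]

lemma kronecker_self_mul_dupMatrix (A : Matrix (Fin p) (Fin p) R) :
    (A ⊗ₖ A) * dupMatrix R p = dupMatrix R p * symKron A :=
  (dupMatrix_mul_submatrix_val _ (kronecker_self_mul_dupMatrix_swap A)).symm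

lemma symKron_mul (A B : Matrix (Fin p) (Fin p) R) :
    symKron (A * B) = symKron A * symKron B := by
  rw [symKron, mul_kronecker_mul, Matrix.mul_assoc, kronecker_self_mul_dupMatrix,
    ← Matrix.mul_assoc, kronecker_self_mul_dupMatrix, Matrix.mul_assoc]
  exact submatrix_val_dupMatrix_mul _

lemma symKron_apply (A : Matrix (Fin p) (Fin p) R) (ab kl : Index p) :
    symKron A ab kl = A ab.1.1 kl.1.1 * A ab.1.2 kl.1.2 +
      if kl.1.1 = kl.1.2 then 0 else A ab.1.1 kl.1.2 * A ab.1.2 kl.1.1 := by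
  rw [symKron, submatrix_apply, mul_apply_eq_vecMul, vecMul_dupMatrix_apply]
  rfl

@[to_additive]
lemma prod_index {M : Type*} [CommMonoid M] (f : Fin p → Fin p → M) :
    ∏ kl : Index p, f kl.1.1 kl.1.2 = ∏ a, ∏ b ∈ Iic a, f a b := by
  rw [← prod_subtype ({ab | ab.2 ≤ ab.1} : Finset (Fin p × Fin p)) (by simp)
    (fun ab => f ab.1 ab.2)]
  exact prod_finset_product _ _ _ (by simp)

lemma prod_index_mul {M : Type*} [CommMonoid M] (d : Fin p → M) :
    ∏ kl : Index p, d kl.1.1 * d kl.1.2 = (∏ i, d i) ^ (p + 1) := by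
  rw [prod_index fun a b => d a * d b, ← prod_pow]
  simp only [prod_mul_distrib, prod_const, Fin.card_Iic]
  rw [prod_comm' (t' := univ) (s' := Ici) (by simp)]
  simp only [prod_const, Fin.card_Ici, ← prod_mul_distrib, ← pow_add]
  exact prod_congr rfl fun a _ => by rw [add_right_comm, Nat.add_sub_cancel' a.is_lt.le]

lemma card_index : Fintype.card (Index p) = p * (p + 1) / 2 := by
  rw [Fintype.card_eq_sum_ones, sum_index fun _ _ => 1]
  simp only [← card_eq_sum_ones, Fin.card_Iic]
  rw [Fin.sum_univ_eq_sum_range (· + 1)]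
  have h := sum_range_id (p + 1)
  rw [sum_range_succ'] at h
  simpa [mul_comm] using h

lemma card_index_offDiag : #{kl : Index p | kl.1.1 ≠ kl.1.2} = p * (p - 1) / 2 := by
  rw [card_filter, sum_index fun a b => if a ≠ b then 1 else 0]
  simp only [← card_filter, filter_ne, mem_Iic, le_refl, card_erase_of_mem, Fin.card_Iic,
    add_tsub_cancel_right]
  rw [Fin.sum_univ_eq_sum_range (fun i => i), sum_range_id]

lemma dupMatrix_transpose_mul_self :
    (dupMatrix R p)ᵀ * dupMatrix R p = diagonal fun kl => if kl.1.1 = kl.1.2 then 1 else 2 := by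
  ext kl ij
  rw [mul_apply_eq_vecMul, vecMul_dupMatrix_apply, diagonal_apply]
  simp only [transpose_apply, dupMatrix, of_apply, toIndex_swap, toIndex_val]
  by_cases h : ij = kl
  · subst h; split_ifs <;> norm_num
  · simp [h, Ne.symm h]

lemma det_dupMatrix_transpose_mul_self :
    det ((dupMatrix R p)ᵀ * dupMatrix R p) = 2 ^ (p * (p - 1) / 2) := by
  rw [dupMatrix_transpose_mul_self, det_diagonal, prod_ite, prod_const_one, prod_const, one_mul,
    card_index_offDiag]

lemma symKron_blockTriangular_of_isUpperTriangular {A : Matrix (Fin p) (Fin p) R}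
    (hA : A.IsUpperTriangular) : (symKron A).BlockTriangular fun kl => toLex kl.1 := by
  intro ab kl h
  rw [symKron_apply]
  rcases Prod.Lex.toLex_lt_toLex.mp h with h | ⟨-, h⟩
  · simp [hA h, hA (kl.2.trans_lt h)]
  · simp [hA h, hA (h.trans_le ab.2)]

lemma symKron_blockTriangular_of_isLowerTriangular {A : Matrix (Fin p) (Fin p) R}
    (hA : A.IsLowerTriangular) :
    (symKron A).BlockTriangular fun kl => OrderDual.toDual (toLex kl.1) := by
  replace hA {i j : Fin p} (h : i < j) : A i j = 0 := hA h
  intro ab kl h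
  rw [symKron_apply]
  rcases Prod.Lex.toLex_lt_toLex.mp (OrderDual.toDual_lt_toDual.mp h) with h | ⟨-, h⟩
  · simp [hA h, hA (ab.2.trans_lt h)]
  · simp [hA h, hA (h.trans_le kl.2)]

lemma det_symKron_of_isUpperTriangular {A : Matrix (Fin p) (Fin p) R}
    (hA : A.IsUpperTriangular) : det (symKron A) = det A ^ (p + 1) := by
  rw [(symKron_blockTriangular_of_isUpperTriangular hA).det_of_injective
      (toLex.injective.comp Subtype.val_injective),
    det_of_isUpperTriangular hA, ← prod_index_mul]
  refine prod_congr rfl fun kl _ => ?_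
  rw [symKron_apply]
  split_ifs with h
  · rw [add_zero]
  · rw [hA (lt_of_le_of_ne kl.2 (Ne.symm h)), zero_mul, add_zero]

lemma det_symKron_of_isLowerTriangular {A : Matrix (Fin p) (Fin p) R}
    (hA : A.IsLowerTriangular) : det (symKron A) = det A ^ (p + 1) := by
  rw [(symKron_blockTriangular_of_isLowerTriangular hA).det_of_injective
      (OrderDual.toDual.injective.comp (toLex.injective.comp Subtype.val_injective)),
    det_of_isLowerTriangular A hA, ← prod_index_mul]
  refine prod_congr rfl fun kl _ => ?_
  rw [symKron_apply]
  split_ifs with h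
  · rw [add_zero]
  · rw [hA (show kl.1.2 < kl.1.1 from lt_of_le_of_ne kl.2 (Ne.symm h)), mul_zero, add_zero]

lemma det_symKron {K : Type*} [Field K] (A : Matrix (Fin p) (Fin p) K) :
    det (symKron A) = det A ^ (p + 1) := by
  refine diagonal_transvection_induction (fun M => det (symKron M) = det M ^ (p + 1)) A
    (fun d _ => det_symKron_of_isUpperTriangular (blockTriangular_diagonal d))
    (fun t => ?_) fun A B hA hB => by rw [symKron_mul, det_mul, det_mul, hA, hB, mul_pow]
  rcases le_total t.i t.j with h | h
  · exact det_symKron_of_isUpperTriangular (blockTriangular_transvection h t.c)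
  · exact det_symKron_of_isLowerTriangular
      (blockTriangular_transvection (b := OrderDual.toDual) h t.c)

lemma det_dupMatrix_transpose_mul_kronecker_self_mul {K : Type*} [Field K]
    (A : Matrix (Fin p) (Fin p) K) :
    det ((dupMatrix K p)ᵀ * (A ⊗ₖ A) * dupMatrix K p) =
      2 ^ (p * (p - 1) / 2) * det A ^ (p + 1) := by
  rw [Matrix.mul_assoc, kronecker_self_mul_dupMatrix, ← Matrix.mul_assoc, det_mul,
    det_dupMatrix_transpose_mul_self, det_symKron]

end Vech

lemma fisher_schur_complement {K ι : Type*} [Field K] [NeZero (2 : K)] [Fintype ι] {p : ℕ}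
    (Λ : Matrix (Fin p) (Fin p) K) [Invertible Λ] (ξ : Matrix (Fin p) (Fin 1) K)
    (D : Matrix (Fin p × Fin p) ι K) :
    (2 : K)⁻¹ • (Dᵀ * ((Λ⁻¹ * (1 + (2 : K) • (ξ * ξᵀ * Λ⁻¹))) ⊗ₖ Λ⁻¹) * D) -
        -(Dᵀ * ((Λ⁻¹ * ξ) ⊗ₖ Λ⁻¹).submatrix id (fun j : Fin p => ((0 : Fin 1), j))) * Λ *
          -(((ξᵀ * Λ⁻¹) ⊗ₖ Λ⁻¹).submatrix (fun i : Fin p => ((0 : Fin 1), i)) id * D) =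
      (2 : K)⁻¹ • (Dᵀ * (Λ⁻¹ ⊗ₖ Λ⁻¹) * D) := by
  have hmid : ((Λ⁻¹ * ξ) ⊗ₖ Λ⁻¹).submatrix id (fun j : Fin p => ((0 : Fin 1), j)) * Λ *
      ((ξᵀ * Λ⁻¹) ⊗ₖ Λ⁻¹).submatrix (fun i : Fin p => ((0 : Fin 1), i)) id =
      (Λ⁻¹ * (ξ * ξᵀ * Λ⁻¹)) ⊗ₖ Λ⁻¹ := by
    rw [kronecker_submatrix_mul_mul_kronecker_submatrix, inv_mul_of_invertible, Matrix.one_mul]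
    simp only [Matrix.mul_assoc]
  calc _ = (2 : K)⁻¹ • (Dᵀ * ((Λ⁻¹ * (1 + (2 : K) • (ξ * ξᵀ * Λ⁻¹))) ⊗ₖ Λ⁻¹) * D) -
        Dᵀ * ((Λ⁻¹ * (ξ * ξᵀ * Λ⁻¹)) ⊗ₖ Λ⁻¹) * D := by
        rw [← hmid]; simp only [Matrix.neg_mul, Matrix.mul_neg, neg_neg, Matrix.mul_assoc]
    _ = _ := by
      rw [Matrix.mul_add, Matrix.mul_one, Matrix.mul_smul, add_kronecker, smul_kronecker,
        Matrix.mul_add, Matrix.add_mul, Matrix.mul_smul, Matrix.smul_mul, smul_add, smul_smul,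
        inv_mul_cancel₀ two_ne_zero, one_smul, add_sub_cancel_right]

theorem det_fisher_information_general {p n : ℕ}
    (Λ : Matrix (Fin p) (Fin p) ℝ) (hΛ : Λ.PosDef)
    (ξ : Matrix (Fin p) (Fin 1) ℝ)
    (D : Matrix (Fin p × Fin p) {ij : Fin p × Fin p // ij.2 ≤ ij.1} ℝ)
    (hD : ∀ M : Matrix (Fin p) (Fin p) ℝ, M.IsSymm →
      D.mulVec (fun ij => M ij.val.1 ij.val.2) = fun ij => M ij.1 ij.2) :
    (Matrix.fromBlocks
        ((n : ℝ) • Λ⁻¹)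
        ((-(n : ℝ)) • ((((ξ.transpose * Λ⁻¹) ⊗ₖ Λ⁻¹).submatrix
            (fun i : Fin p => ((0 : Fin 1), i)) id) * D))
        ((-(n : ℝ)) • (D.transpose * (((Λ⁻¹ * ξ) ⊗ₖ Λ⁻¹).submatrix
            id (fun j : Fin p => ((0 : Fin 1), j)))))
        (((n : ℝ) / 2) • (D.transpose *
            ((Λ⁻¹ * (1 + (2 : ℝ) • (ξ * ξ.transpose * Λ⁻¹))) ⊗ₖ Λ⁻¹) * D))).det
      = (n : ℝ) ^ (p * (p + 3) / 2) * (2 : ℝ) ^ (-(p : ℤ)) * Λ.det ^ (-(p : ℤ) - 2) := by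
  obtain rfl := Vech.eq_dupMatrix_of_mulVec hD
  let := Λ.invertibleOfIsUnitDet hΛ.det_pos.ne'.isUnit
  rw [neg_smul, neg_smul, ← smul_neg, ← smul_neg, div_eq_mul_inv, mul_smul, ← fromBlocks_smul,
    det_smul, Fintype.card_sum, Fintype.card_fin, Vech.card_index]
  rw [det_fromBlocks₁₁, invOf_eq_nonsing_inv, inv_inv_of_invertible, fisher_schur_complement]
  rw [det_smul, Vech.det_dupMatrix_transpose_mul_kronecker_self_mul, Vech.card_index,
    det_nonsing_inv, Ring.inverse_eq_inv']
  have hpairs : p * (p + 1) / 2 = p * (p - 1) / 2 + p := by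
    have : p * (p + 1) = p * (p - 1) + 2 * p := by cases p <;> simp; ring
    omega
  have hexp : p * (p + 3) / 2 = p + p * (p + 1) / 2 := by
    have : p * (p + 3) = p * (p + 1) + 2 * p := by ring
    omega
  have htwo : (2 : ℝ)⁻¹ ^ (p * (p + 1) / 2) * 2 ^ (p * (p - 1) / 2) = (2 ^ p)⁻¹ := by
    rw [hpairs, pow_add, inv_pow, inv_pow, mul_right_comm, inv_mul_cancel₀ (by positivity),
      one_mul]
  rw [hexp, _root_.zpow_neg, zpow_natCast, ← htwo,
    show -(p : ℤ) - 2 = -((p + 2 : ℕ) : ℤ) by push_cast; ring, _root_.zpow_neg, zpow_natCast]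
  ring

/-- Determinant of the Fisher information matrix of the multivariate normal model in
the canonical parameterization: `|J_{φφ}(φ)| = n^{p(p+3)/2} 2^{-p} |Λ|^{-(p+2)}`. -/
theorem det_fisher_information {p n : ℕ} (hn : 0 < n)
    (Λ : Matrix (Fin p) (Fin p) ℝ) (hΛ : Λ.PosDef)
    (ξ : Matrix (Fin p) (Fin 1) ℝ)
    (D : Matrix (Fin p × Fin p) {ij : Fin p × Fin p // ij.2 ≤ ij.1} ℝ)
    (hD : ∀ M : Matrix (Fin p) (Fin p) ℝ, M.IsSymm →
      D.mulVec (fun ij => M ij.val.1 ij.val.2) = fun ij => M ij.1 ij.2) :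
    (Matrix.fromBlocks
        ((n : ℝ) • Λ⁻¹)
        ((-(n : ℝ)) • ((((ξ.transpose * Λ⁻¹) ⊗ₖ Λ⁻¹).submatrix
            (fun i : Fin p => ((0 : Fin 1), i)) id) * D))
        ((-(n : ℝ)) • (D.transpose * (((Λ⁻¹ * ξ) ⊗ₖ Λ⁻¹).submatrix
            id (fun j : Fin p => ((0 : Fin 1), j)))))
        (((n : ℝ) / 2) • (D.transpose *
            ((Λ⁻¹ * (1 + (2 : ℝ) • (ξ * ξ.transpose * Λ⁻¹))) ⊗ₖ Λ⁻¹) * D))).det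
      = (n : ℝ) ^ (p * (p + 3) / 2) * (2 : ℝ) ^ (-(p : ℤ)) * Λ.det ^ (-(p : ℤ) - 2) :=
  det_fisher_information_general Λ hΛ ξ D hD
end

section
/- For the block matrix J = [[A, B],[B^T, C]] with A invertible, the Schur complement computation gives: for A = nΛ⁻¹, B = −n(ξ^TΛ⁻¹ ⊗ Λ⁻¹)D_p, C = (n/2)D_p^T{Λ⁻¹(I + 2ξξ^TΛ⁻¹) ⊗ Λ⁻¹}D_p, the Schur complement C − B^T A⁻¹ B equals (n/2)D_p^T(Λ⁻¹ ⊗ Λ⁻¹)D_p. -/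
open Matrix Kronecker

/-- The Schur complement `C − BᵀA⁻¹B` of the Fisher information block matrix equals
`(n/2)Dᵀ(Λ⁻¹ ⊗ Λ⁻¹)D`. -/
theorem schur_complement_fisher {p n : ℕ} (hn : 0 < n)
    (Λ : Matrix (Fin p) (Fin p) ℝ) (hΛ : Λ.PosDef)
    (ξ : Matrix (Fin p) (Fin 1) ℝ)
    (D : Matrix (Fin p × Fin p) {ij : Fin p × Fin p // ij.2 ≤ ij.1} ℝ)
    (hD : ∀ M : Matrix (Fin p) (Fin p) ℝ, M.IsSymm →
      D.mulVec (fun ij => M ij.val.1 ij.val.2) = fun ij => M ij.1 ij.2) :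
    (((n : ℝ) / 2) • (D.transpose *
        ((Λ⁻¹ * (1 + (2 : ℝ) • (ξ * ξ.transpose * Λ⁻¹))) ⊗ₖ Λ⁻¹) * D)) -
      ((-(n : ℝ)) • ((((ξ.transpose * Λ⁻¹) ⊗ₖ Λ⁻¹).submatrix
          (fun i : Fin p => ((0 : Fin 1), i)) id) * D)).transpose *
        ((n : ℝ) • Λ⁻¹)⁻¹ *
        ((-(n : ℝ)) • ((((ξ.transpose * Λ⁻¹) ⊗ₖ Λ⁻¹).submatrix
          (fun i : Fin p => ((0 : Fin 1), i)) id) * D))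
      = ((n : ℝ) / 2) • (D.transpose * (Λ⁻¹ ⊗ₖ Λ⁻¹) * D) := by
  have hnR : (n : ℝ) ≠ 0 := Nat.cast_ne_zero.mpr hn.ne'
  have hdet : IsUnit Λ.det := hΛ.det_pos.ne'.isUnit
  have hinv : Λ⁻¹ * Λ = 1 := Λ.nonsing_inv_mul hdet
  have hsymmΛ : Λᵀ = Λ := by
    have := hΛ.isHermitian; rwa [Matrix.IsHermitian, conjTranspose_eq_transpose_of_trivial] at this
  have hsymm : Λ⁻¹ᵀ = Λ⁻¹ := by rw [transpose_nonsing_inv, hsymmΛ]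
  set M : Matrix (Fin 1 × Fin p) (Fin p × Fin p) ℝ := (ξ.transpose * Λ⁻¹) ⊗ₖ Λ⁻¹ with hM
  set E : Matrix (Fin p) (Fin p × Fin p) ℝ :=
    M.submatrix (fun i : Fin p => ((0 : Fin 1), i)) id with hE
  -- the equivalence Fin p ≃ Fin 1 × Fin p
  let e : Fin p ≃ Fin 1 × Fin p :=
    ⟨fun i => ((0 : Fin 1), i), Prod.snd, fun i => rfl,
      fun x => Prod.ext (Subsingleton.elim _ _) rfl⟩
  have hEe : E = M.submatrix e id := rfl
  have hΛsub : Λ = ((1 : Matrix (Fin 1) (Fin 1) ℝ) ⊗ₖ Λ).submatrix e e := by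
    ext i j
    simp [e, Matrix.kroneckerMap_apply, Matrix.one_apply]
  have key : Eᵀ * Λ * E = (Λ⁻¹ * (ξ * ξ.transpose * Λ⁻¹)) ⊗ₖ Λ⁻¹ := by
    conv_lhs => rw [hEe, hΛsub, transpose_submatrix, submatrix_mul_equiv, submatrix_mul_equiv,
      submatrix_id_id, hM, ← kroneckerMap_transpose, ← Matrix.mul_kronecker_mul,
      ← Matrix.mul_kronecker_mul, transpose_mul, hsymm, transpose_transpose,
      Matrix.mul_one, hinv, Matrix.one_mul]
    simp only [Matrix.mul_assoc]
  have hinvsmul : ((n : ℝ) • Λ⁻¹)⁻¹ = (n : ℝ)⁻¹ • Λ := by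
    apply Matrix.inv_eq_right_inv
    rw [Matrix.smul_mul, Matrix.mul_smul, smul_smul, hinv, mul_inv_cancel₀ hnR, one_smul]
  rw [hinvsmul]
  have hB : ((-(n : ℝ)) • (E * D)).transpose * ((n : ℝ)⁻¹ • Λ) * ((-(n : ℝ)) • (E * D))
      = (n : ℝ) • (Dᵀ * ((Λ⁻¹ * (ξ * ξ.transpose * Λ⁻¹)) ⊗ₖ Λ⁻¹) * D) := by
    have hX : Dᵀ * Eᵀ * Λ * (E * D) = Dᵀ * (Eᵀ * Λ * E) * D := by
      simp only [Matrix.mul_assoc]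
    simp only [transpose_smul, transpose_mul, Matrix.smul_mul, Matrix.mul_smul, smul_smul]
    rw [hX, key]
    congr 1
    field_simp
  rw [hB]
  have expand : Λ⁻¹ * (1 + (2 : ℝ) • (ξ * ξ.transpose * Λ⁻¹))
      = Λ⁻¹ + (2 : ℝ) • (Λ⁻¹ * (ξ * ξ.transpose * Λ⁻¹)) := by
    rw [Matrix.mul_add, Matrix.mul_one, Matrix.mul_smul]
  rw [expand, add_kronecker, smul_kronecker, Matrix.mul_add, Matrix.add_mul, smul_add,
    Matrix.mul_smul, Matrix.smul_mul, smul_smul]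
  rw [show (n:ℝ)/2 * 2 = (n:ℝ) by ring, add_sub_cancel_right]
end

section
/- Let A₀, A₁, …, A_k be symmetric positive definite p×p matrices with tr(A₀⁻¹A_i) = p for each i, and suppose A_j ≠ A₀ for some j. Let ν⁽ⁱ⁾₍₁₎ denote the smallest eigenvalue of A₀⁻¹A_i. Then min_i ν⁽ⁱ⁾₍₁₎ < 1, and for every i the matrix (1-t)A₀ + tA_i is positive definite for all t ∈ [0, 1/(1 − min_i ν⁽ⁱ⁾₍₁₎)). -/
/-!
Congruence by `S = A₀^{-1/2}` turns `A₀` into `1` and `A_i` into the Hermitian matrix `S A_i S`,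
which is similar to `A₀⁻¹ A_i`. Hence a lower bound `c` on the spectrum of `A₀⁻¹ A_i` means
`A_i - c A₀ ⪰ 0`. If `m ≥ 1`, this gives `A_j - A₀ ⪰ 0` with `tr (A₀⁻¹ (A_j - A₀)) = p - p = 0`,
forcing `A_j = A₀`. Finally `(1 - t) A₀ + t A_i = (1 - t (1 - m)) A₀ + t (A_i - m A₀)` is positive
definite plus positive semidefinite as long as `t (1 - m) < 1`.
-/

open scoped MatrixOrder ComplexOrder

namespace Matrix

variable {n 𝕜 : Type*} [RCLike 𝕜] {A₀ A : Matrix n n 𝕜}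

lemma PosDef.one_sub_smul_add_smul (hA₀ : A₀.PosDef) {m t : ℝ} (hA : (A - m • A₀).PosSemidef)
    (ht₀ : 0 ≤ t) (ht : t * (1 - m) < 1) : ((1 - t) • A₀ + t • A).PosDef := by
  have hsplit : (1 - t) • A₀ + t • A = (1 - t * (1 - m)) • A₀ + t • (A - m • A₀) := by module
  rw [hsplit]
  exact (hA₀.smul (sub_pos.2 ht)).add_posSemidef (hA.smul ht₀)

variable [Fintype n] [DecidableEq n]

lemma PosDef.exists_isHermitian_mul_self_eq_inv (hA₀ : A₀.PosDef) :
    ∃ S : Matrix n n 𝕜, S.IsHermitian ∧ IsUnit S ∧ S * S = A₀⁻¹ ∧ S * A₀ * S = 1 := by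
  have hinv : 0 ≤ A₀⁻¹ := hA₀.inv.posSemidef.nonneg
  have hSS : CFC.sqrt A₀⁻¹ * CFC.sqrt A₀⁻¹ = A₀⁻¹ := CFC.sqrt_mul_sqrt_self _ hinv
  refine ⟨CFC.sqrt A₀⁻¹, IsSelfAdjoint.of_nonneg (CFC.sqrt_nonneg _),
    (CFC.isUnit_sqrt_iff _ hinv).2 hA₀.inv.isUnit, hSS, ?_⟩
  rw [mul_assoc, ← mul_eq_one_comm, mul_assoc, hSS,
    mul_nonsing_inv _ ((isUnit_iff_isUnit_det _).1 hA₀.isUnit)]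

lemma PosDef.posSemidef_sub_smul_of_le_spectrum (hA₀ : A₀.PosDef) (hA : A.IsHermitian) {c : ℝ}
    (hc : ∀ μ ∈ spectrum ℝ (A₀⁻¹ * A), c ≤ μ) : (A - c • A₀).PosSemidef := by
  obtain ⟨S, hSH, hSU, hSS, hSA₀S⟩ := hA₀.exists_isHermitian_mul_self_eq_inv
  have hspec : spectrum ℝ (A₀⁻¹ * A) = spectrum ℝ (S * A * S) := by
    obtain ⟨u, rfl⟩ := hSU
    rw [← hSS, ← spectrum.units_conjugate (u := u⁻¹)]
    simp [mul_assoc]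
  have hSAS : (S * A * S).IsHermitian := by
    simpa [hSH.eq] using isHermitian_conjTranspose_mul_mul S hA
  have hle : algebraMap ℝ _ c ≤ S * A * S :=
    (algebraMap_le_iff_le_spectrum hSAS.isSelfAdjoint).2 (hspec ▸ hc)
  rw [← IsUnit.posSemidef_star_left_conjugate_iff hSU, star_eq_conjTranspose, hSH.eq]
  convert le_iff.1 hle using 1
  rw [mul_sub, sub_mul, mul_smul_comm, smul_mul_assoc, hSA₀S, Algebra.algebraMap_eq_smul_one]

lemma PosDef.eq_of_posSemidef_sub_of_trace_inv_mul_eq_card (hA₀ : A₀.PosDef)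
    (hA : (A - A₀).PosSemidef) (htr : (A₀⁻¹ * A).trace = Fintype.card n) : A = A₀ := by
  obtain ⟨S, hSH, hSU, hSS, hSA₀S⟩ := hA₀.exists_isHermitian_mul_self_eq_inv
  have hpsd : (S * (A - A₀) * S).PosSemidef := by
    simpa [hSH.eq] using hA.conjTranspose_mul_mul_same S
  have htr0 : (S * (A - A₀) * S).trace = 0 := by
    rw [mul_sub, sub_mul, trace_sub, hSA₀S, trace_mul_cycle, hSS, htr, trace_one, sub_self]
  rwa [hpsd.trace_eq_zero_iff, hSU.mul_left_eq_zero, hSU.mul_right_eq_zero, sub_eq_zero] at htr0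

end Matrix

theorem posDef_interval_groups_general {p k : ℕ} (A₀ : Matrix (Fin p) (Fin p) ℝ)
    (A : Fin k → Matrix (Fin p) (Fin p) ℝ)
    (hA₀ : A₀.PosDef) (hA : ∀ i, (A i).PosDef)
    (htr : ∀ i, (A₀⁻¹ * A i).trace = p)
    (hne : ∃ j, A j ≠ A₀)
    (ν : Fin k → ℝ)
    (hνmin : ∀ i, ∀ μ ∈ spectrum ℝ (A₀⁻¹ * A i), ν i ≤ μ)
    (m : ℝ) (hm : ∀ i, m ≤ ν i) :
    m < 1 ∧ ∀ i, ∀ t ∈ Set.Ico (0 : ℝ) (1 / (1 - m)),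
      ((1 - t) • A₀ + t • A i).PosDef := by
  have hbound : ∀ i, ∀ μ ∈ spectrum ℝ (A₀⁻¹ * A i), m ≤ μ :=
    fun i μ hμ ↦ (hm i).trans (hνmin i μ hμ)
  have hm1 : m < 1 := by
    by_contra! h1
    obtain ⟨j, hj⟩ := hne
    have hpsd := hA₀.posSemidef_sub_smul_of_le_spectrum (hA j).isHermitian
      fun μ hμ ↦ h1.trans (hbound j μ hμ)
    rw [one_smul] at hpsd
    exact hj (hA₀.eq_of_posSemidef_sub_of_trace_inv_mul_eq_card hpsd (by simpa using htr j))
  refine ⟨hm1, fun i t ⟨ht₀, ht⟩ ↦ hA₀.one_sub_smul_add_smul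
    (hA₀.posSemidef_sub_smul_of_le_spectrum (hA i).isHermitian (hbound i)) ht₀ ?_⟩
  rwa [lt_div_iff₀ (sub_pos.2 hm1)] at ht

/-- With `tr(A₀⁻¹A_i) = p` for each of `k` groups and some `A_j ≠ A₀`, the minimum `m`
of the smallest eigenvalues of the `A₀⁻¹A_i` satisfies `m < 1`, and each
`(1-t)A₀ + tA_i` is positive definite for `t ∈ [0, 1/(1-m))`. -/
theorem posDef_interval_groups {p k : ℕ} (A₀ : Matrix (Fin p) (Fin p) ℝ)
    (A : Fin k → Matrix (Fin p) (Fin p) ℝ)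
    (hA₀ : A₀.PosDef) (hA : ∀ i, (A i).PosDef)
    (htr : ∀ i, (A₀⁻¹ * A i).trace = p)
    (hne : ∃ j, A j ≠ A₀)
    (ν : Fin k → ℝ)
    (hν : ∀ i, ν i ∈ spectrum ℝ (A₀⁻¹ * A i))
    (hνmin : ∀ i, ∀ μ ∈ spectrum ℝ (A₀⁻¹ * A i), ν i ≤ μ)
    (m : ℝ) (hm : ∀ i, m ≤ ν i) (hm' : ∃ i, m = ν i) :
    m < 1 ∧ ∀ i, ∀ t ∈ Set.Ico (0 : ℝ) (1 / (1 - m)),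
      ((1 - t) • A₀ + t • A i).PosDef :=
  posDef_interval_groups_general A₀ A hA₀ hA htr hne ν hνmin m hm
end
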